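/- Let E be a Polish space with Borel σ-algebra 𝓔 and U a compact metric space, let P^a(x,·) be a controlled transition kernel, and let R ⊆ R₁ be two concentric closed balls in E. Let u_n, u : E → U be Borel measurable controls with u_n(x) → u(x) for every x ∈ E, such that for every x ∈ E, sup_{B ∈ 𝓔} |Q^{u_n}(x,B) − Q^{u}(x,B)| → 0 as n → ∞. Assume (EC): sup_{x ∈ R} sup_v E_x^v[(τ_R)²] < ∞, where v runs over {u_n : n ∈ ℕ} ∪ {u}. Then for every positive integer k and every x ∈ R, sup over Borel subsets B of R of |(Π^{u_n})^k(x,B) − (Π^{u})^k(x,B)| → 0 as n → ∞. -/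

import Mathlib

open MeasureTheory ProbabilityTheory Filter
open scoped ENNReal

/-- First hitting time of a set `B` by the path `ω` (`∞` if never hit). -/
noncomputable def hitTime {E : Type*} (B : Set E) (ω : ℕ → E) : ℕ∞ :=
  ⨅ (n : ℕ) (_ : ω n ∈ B), (n : ℕ∞)

/-- `τ_R = D_{R₁ᶜ} + D_R ∘ θ_{D_{R₁ᶜ}}`: first entrance time to `R` after first
leaving `R₁`. -/
noncomputable def tauR {E : Type*} (R R1 : Set E) (ω : ℕ → E) : ℕ∞ :=
  hitTime R1ᶜ ω + hitTime R (fun n => ω ((hitTime R1ᶜ ω).toNat + n))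

/-- Prepend a point to a path. -/
def prepend {E : Type*} (x : E) (ω : ℕ → E) : ℕ → E :=
  fun n => match n with
  | 0 => x
  | k + 1 => ω k

/-- `Pl` is the family of Ionescu–Tulcea laws `P_x` of the Markov chain with transition
kernel `Q` started at `x`: it is characterized by being a measurable family of
probability measures satisfying the one-step recursion
`P_x = (prepend x)_* ((Q x) bind Pl)`. -/
def IsPathLaw {E : Type*} [MeasurableSpace E] (Q : Kernel E E)
    (Pl : E → Measure (ℕ → E)) : Prop :=
  Measurable Pl ∧ (∀ x, IsProbabilityMeasure (Pl x)) ∧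
    ∀ x, Pl x = ((Q x).bind Pl).map (prepend x)

/-- The embedded kernel `Π(x,B) = P_x(τ_R < ∞, X_{τ_R} ∈ B)`, as a measure on `E`. -/
noncomputable def embMeas {E : Type*} [MeasurableSpace E] (R R1 : Set E)
    (Pl : E → Measure (ℕ → E)) (x : E) : Measure E :=
  ((Pl x).restrict {ω | tauR R R1 ω ≠ ⊤}).map (fun ω => ω ((tauR R R1 ω).toNat))

/-- `k`-th iterate of a measure-valued map (sub-Markov transition function):
`Π^0(x,·) = δ_x`, `Π^{k+1}(x,B) = ∫ Π^k(y,B) Π(x,dy)`. -/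
noncomputable def mIter {E : Type*} [MeasurableSpace E] (Pi0 : E → Measure E) :
    ℕ → E → Measure E
  | 0 => fun x => Measure.dirac x
  | k + 1 => fun x => (Pi0 x).bind (mIter Pi0 k)

/-- The kernel `Q^u(x,·) = P^{u(x)}(x,·)` of a Borel measurable control `u`. -/
noncomputable def Qctrl {E U : Type*} [MeasurableSpace E] [MeasurableSpace U]
    (P : Kernel (E × U) E) (u : E → U) (hu : Measurable u) : Kernel E E :=
  P.comap (fun x => (x, u x)) (measurable_id.prodMk hu)

/-- Total variation distance `sup_{B ∈ 𝓔} |μ(B) − ν(B)|`. -/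
noncomputable def tvDist {E : Type*} [MeasurableSpace E] (μ ν : Measure E) : ℝ :=
  ⨆ B : {B : Set E // MeasurableSet B}, |(μ B.1).toReal - (ν B.1).toReal|

/-!
Everything is done with the total variation distance `etvDist` in `ℝ≥0∞`. Its key property is
`etvDist (μ₁.bind F₁) (μ₂.bind F₂) ≤ etvDist μ₁ μ₂ + ∫ etvDist (F₁ y) (F₂ y) dμ₂` (a Hahn
decomposition argument), so by dominated convergence, total variation convergence passes through
`bind`; measurability of the integrand comes from reducing the supremum to countably many open
sets. Iterating the recursion `P_x = (prepend x)_* (Q x).bind P` gives convergence of the laws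
of the paths stopped at any fixed time `m`. On `{τ_R ≤ m}` the exit point `X_{τ_R}` is a
function of the stopped path, while by (EC) and Chebyshev `P_x(τ_R > m) ≤ C / (m + 1)²` uniformly
in the control; hence the embedded kernels converge in total variation at each `x ∈ R`. They
are concentrated on `R`, so one more induction through `bind` handles the iterates.
-/

open scoped Topology

section TotalVariation

variable {α β : Type*} [MeasurableSpace α] [MeasurableSpace β]

/-- `tvDist` with values in `ℝ≥0∞`: the two truncated subtractions together give `|μ B - ν B|`. -/
noncomputable def etvDist (μ ν : Measure α) : ℝ≥0∞ :=
  ⨆ B : {B : Set α // MeasurableSet B}, (μ B.1 - ν B.1) ⊔ (ν B.1 - μ B.1)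

lemma le_etvDist {μ ν : Measure α} {B : Set α} (hB : MeasurableSet B) :
    (μ B - ν B) ⊔ (ν B - μ B) ≤ etvDist μ ν :=
  le_iSup (fun B : {B : Set α // MeasurableSet B} => (μ B.1 - ν B.1) ⊔ (ν B.1 - μ B.1)) ⟨B, hB⟩

lemma etvDist_le {μ ν : Measure α} {c : ℝ≥0∞}
    (h : ∀ B, MeasurableSet B → (μ B - ν B) ⊔ (ν B - μ B) ≤ c) : etvDist μ ν ≤ c :=
  iSup_le fun B => h B.1 B.2

lemma etvDist_comm (μ ν : Measure α) : etvDist μ ν = etvDist ν μ := by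
  simp only [etvDist, sup_comm]

@[simp]
lemma etvDist_self (μ : Measure α) : etvDist μ μ = 0 :=
  le_antisymm (etvDist_le fun B _ => by simp) bot_le

lemma etvDist_triangle (μ ν ρ : Measure α) : etvDist μ ρ ≤ etvDist μ ν + etvDist ν ρ :=
  etvDist_le fun _ hB => sup_le
    (tsub_le_tsub_add_tsub.trans
      (add_le_add (le_sup_left.trans (le_etvDist hB)) (le_sup_left.trans (le_etvDist hB))))
    (tsub_le_tsub_add_tsub.trans_eq (add_comm _ _) |>.trans
      (add_le_add (le_sup_right.trans (le_etvDist hB)) (le_sup_right.trans (le_etvDist hB))))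

lemma etvDist_le_max (μ ν : Measure α) : etvDist μ ν ≤ μ Set.univ ⊔ ν Set.univ :=
  etvDist_le fun _ _ => sup_le_sup (tsub_le_self.trans (measure_mono (Set.subset_univ _)))
    (tsub_le_self.trans (measure_mono (Set.subset_univ _)))

lemma etvDist_ne_top (μ ν : Measure α) [IsFiniteMeasure μ] [IsFiniteMeasure ν] :
    etvDist μ ν ≠ ⊤ :=
  ne_top_of_le_ne_top (by simp) (etvDist_le_max μ ν)

lemma etvDist_map_le (μ ν : Measure α) {g : α → β} (hg : Measurable g) :
    etvDist (μ.map g) (ν.map g) ≤ etvDist μ ν :=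
  etvDist_le fun B hB => by
    rw [Measure.map_apply hg hB, Measure.map_apply hg hB]
    exact le_etvDist (hg hB)

lemma etvDist_restrict_le (μ ν : Measure α) {s : Set α} (hs : MeasurableSet s) :
    etvDist (μ.restrict s) (ν.restrict s) ≤ etvDist μ ν :=
  etvDist_le fun B hB => by
    rw [Measure.restrict_apply hB, Measure.restrict_apply hB]
    exact le_etvDist (hB.inter hs)

lemma etvDist_restrict_self_le (μ : Measure α) (s : Set α) :
    etvDist μ (μ.restrict s) ≤ μ sᶜ :=
  etvDist_le fun B hB => by
    rw [Measure.restrict_apply hB, tsub_eq_zero_of_le (measure_mono Set.inter_subset_left),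
      max_eq_left zero_le, tsub_le_iff_left]
    exact (measure_le_inter_add_sdiff μ B s).trans
      (add_le_add le_rfl (measure_mono (Set.sdiff_subset_compl B s)))

/-- The Hahn decomposition `s` splits `∫ f d(μ - ν)` into a part bounded by `μ s - ν s`
and a nonpositive part. -/
lemma lintegral_tsub_le_etvDist (μ ν : Measure α) [IsFiniteMeasure μ] [IsFiniteMeasure ν]
    {f : α → ℝ≥0∞} (hf : ∀ a, f a ≤ 1) :
    ∫⁻ a, f a ∂μ - ∫⁻ a, f a ∂ν ≤ etvDist μ ν := by
  obtain ⟨s, hs, hνμ, hμν⟩ := hahn_decomposition μ ν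
  have hle_s : ν.restrict s ≤ μ.restrict s := Measure.le_iff.mpr fun t ht => by
    rw [Measure.restrict_apply ht, Measure.restrict_apply ht]
    exact hνμ _ (ht.inter hs) Set.inter_subset_right
  have hle_sc : μ.restrict sᶜ ≤ ν.restrict sᶜ := Measure.le_iff.mpr fun t ht => by
    rw [Measure.restrict_apply ht, Measure.restrict_apply ht]
    exact hμν _ (ht.inter hs.compl) Set.inter_subset_right
  have hdiff : (μ.restrict s - ν.restrict s) Set.univ = μ s - ν s := by
    rw [Measure.sub_apply MeasurableSet.univ hle_s, Measure.restrict_apply_univ,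
      Measure.restrict_apply_univ]
  rw [tsub_le_iff_left]
  calc ∫⁻ a, f a ∂μ
      = ∫⁻ a, f a ∂(μ.restrict s - ν.restrict s) + ∫⁻ a in s, f a ∂ν
          + ∫⁻ a in sᶜ, f a ∂μ := by
        rw [← lintegral_add_measure, Measure.sub_add_cancel_of_le hle_s,
          lintegral_add_compl f hs]
    _ ≤ (μ s - ν s) + ∫⁻ a in s, f a ∂ν + ∫⁻ a in sᶜ, f a ∂ν := by
        gcongr
        exact (lintegral_mono hf).trans_eq (by rw [lintegral_one, hdiff])
    _ ≤ ∫⁻ a, f a ∂ν + etvDist μ ν := by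
        rw [add_assoc, lintegral_add_compl f hs, add_comm]
        gcongr
        exact le_sup_left.trans (le_etvDist hs)

lemma etvDist_bind_le {μ₁ μ₂ : Measure α} [IsFiniteMeasure μ₁] [IsFiniteMeasure μ₂]
    {F₁ F₂ : α → Measure β} (hF₁ : Measurable F₁) (hF₂ : Measurable F₂)
    (hF₁_le : ∀ a, F₁ a Set.univ ≤ 1) :
    etvDist (μ₁.bind F₁) (μ₂.bind F₂) ≤ etvDist μ₁ μ₂ + ∫⁻ a, etvDist (F₁ a) (F₂ a) ∂μ₂ := by
  refine etvDist_le fun B hB => ?_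
  rw [Measure.bind_apply hB hF₁.aemeasurable, Measure.bind_apply hB hF₂.aemeasurable]
  have hm₁ : Measurable fun a => F₁ a B := (Measure.measurable_coe hB).comp hF₁
  have hm₂ : Measurable fun a => F₂ a B := (Measure.measurable_coe hB).comp hF₂
  have hF₁B : ∀ a, F₁ a B ≤ 1 := fun a => (measure_mono (Set.subset_univ B)).trans (hF₁_le a)
  have h₁₂ : ∫⁻ a, F₁ a B ∂μ₂ - ∫⁻ a, F₂ a B ∂μ₂ ≤ ∫⁻ a, etvDist (F₁ a) (F₂ a) ∂μ₂ :=
    (lintegral_sub_le _ _ hm₂).trans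
      (lintegral_mono fun a => le_sup_left.trans (le_etvDist hB))
  have h₂₁ : ∫⁻ a, F₂ a B ∂μ₂ - ∫⁻ a, F₁ a B ∂μ₂ ≤ ∫⁻ a, etvDist (F₁ a) (F₂ a) ∂μ₂ :=
    (lintegral_sub_le _ _ hm₁).trans
      (lintegral_mono fun a => le_sup_right.trans (le_etvDist hB))
  refine sup_le (tsub_le_tsub_add_tsub.trans
    (add_le_add (lintegral_tsub_le_etvDist μ₁ μ₂ hF₁B) h₁₂)) ?_
  refine tsub_le_tsub_add_tsub.trans ((add_le_add h₂₁ ?_).trans_eq (add_comm _ _))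
  exact etvDist_comm μ₁ μ₂ ▸ lintegral_tsub_le_etvDist μ₂ μ₁ hF₁B

end TotalVariation

section RealValued

variable {α : Type*} [MeasurableSpace α] (μ ν : Measure α) [IsFiniteMeasure μ] [IsFiniteMeasure ν]

lemma abs_toReal_sub_le_toReal_etvDist {B : Set α} (hB : MeasurableSet B) :
    |(μ B).toReal - (ν B).toReal| ≤ (etvDist μ ν).toReal := by
  have hD := le_etvDist (μ := μ) (ν := ν) hB
  have hD_ne_top := etvDist_ne_top μ ν
  rw [abs_sub_le_iff]
  exact ⟨(ENNReal.le_toReal_sub (measure_ne_top ν B)).trans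
      (ENNReal.toReal_mono hD_ne_top (le_sup_left.trans hD)),
    (ENNReal.le_toReal_sub (measure_ne_top μ B)).trans
      (ENNReal.toReal_mono hD_ne_top (le_sup_right.trans hD))⟩

lemma etvDist_le_ofReal_tvDist : etvDist μ ν ≤ ENNReal.ofReal (tvDist μ ν) := by
  have hbdd : BddAbove (Set.range fun B : {B : Set α // MeasurableSet B} =>
      |(μ B.1).toReal - (ν B.1).toReal|) :=
    ⟨_, Set.forall_mem_range.mpr fun B => abs_toReal_sub_le_toReal_etvDist μ ν B.2⟩
  have hsub : ∀ a b : ℝ≥0∞, a ≠ ⊤ → b ≠ ⊤ → a - b ≤ ENNReal.ofReal |a.toReal - b.toReal| :=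
    fun a b ha hb => calc
      a - b = ENNReal.ofReal (a.toReal - b.toReal) := by
        rw [ENNReal.ofReal_sub _ ENNReal.toReal_nonneg, ENNReal.ofReal_toReal ha,
          ENNReal.ofReal_toReal hb]
      _ ≤ ENNReal.ofReal |a.toReal - b.toReal| := ENNReal.ofReal_le_ofReal (le_abs_self _)
  refine etvDist_le fun B hB => ?_
  refine (sup_le (hsub _ _ (measure_ne_top μ B) (measure_ne_top ν B)) ?_).trans
    (ENNReal.ofReal_le_ofReal (le_ciSup hbdd ⟨B, hB⟩))
  exact abs_sub_comm (μ B).toReal _ ▸ hsub _ _ (measure_ne_top ν B) (measure_ne_top μ B)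

end RealValued

section Convergence

variable {α : Type*} [MeasurableSpace α] {μ : ℕ → Measure α} {ν : Measure α}
  [∀ n, IsFiniteMeasure (μ n)] [IsFiniteMeasure ν]

lemma tendsto_etvDist_of_tendsto_tvDist (h : Tendsto (fun n => tvDist (μ n) ν) atTop (𝓝 0)) :
    Tendsto (fun n => etvDist (μ n) ν) atTop (𝓝 0) :=
  tendsto_of_tendsto_of_tendsto_of_le_of_le tendsto_const_nhds
    (by simpa using ENNReal.tendsto_ofReal h) (fun _ => zero_le)
    fun n => etvDist_le_ofReal_tvDist _ _

lemma tendsto_iSup_abs_toReal_sub_of_tendsto_etvDist (p : Set α → Prop)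
    (h : Tendsto (fun n => etvDist (μ n) ν) atTop (𝓝 0)) :
    Tendsto (fun n => ⨆ B : {B : Set α // MeasurableSet B ∧ p B},
      |(μ n B.1).toReal - (ν B.1).toReal|) atTop (𝓝 0) :=
  squeeze_zero (fun _ => Real.iSup_nonneg fun _ => abs_nonneg _)
    (fun n => Real.iSup_le (fun B => abs_toReal_sub_le_toReal_etvDist _ _ B.2.1)
      ENNReal.toReal_nonneg)
    (by simpa [Function.comp_def] using (ENNReal.tendsto_toReal ENNReal.zero_ne_top).comp h)

end Convergence

section Measurability

open TopologicalSpace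

variable {X : Type*} [TopologicalSpace X] [SecondCountableTopology X] [PseudoMetrizableSpace X]
  [MeasurableSpace X] [BorelSpace X]

/-- By outer regularity, `μ B - ν B` is approached on open sets, and by continuity from below
on finite unions of basic open sets. -/
lemma tsub_le_iSup_finite_basis_union (μ ν : Measure X) [IsFiniteMeasure μ] [IsFiniteMeasure ν]
    (B : Set X) :
    μ B - ν B ≤ ⨆ t : Finset (countableBasis X), (μ (⋃ b ∈ t, (b : Set X)) - ν (⋃ b ∈ t, b)) := by
  classical
  have hbasis := isBasis_countableBasis X
  refine ENNReal.le_of_forall_pos_le_add fun ε hε _ => ?_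
  obtain ⟨U, hBU, hU, hνU⟩ := Set.exists_isOpen_le_add B ν (ε := ε) (by simpa using hε.ne')
  let T := {t : Finset (countableBasis X) // ⋃ b ∈ t, (b : Set X) ⊆ U}
  have hU_eq : ⋃ t : T, ⋃ b ∈ t.1, (b : Set X) = U := by
    refine subset_antisymm (Set.iUnion_subset fun t => t.2) fun x hx => ?_
    obtain ⟨b, hb, hxb, hbU⟩ := hbasis.exists_subset_of_mem_open hx hU
    exact Set.mem_iUnion.mpr ⟨⟨{⟨b, hb⟩}, by simpa using hbU⟩, by simpa using hxb⟩
  have hdir : Directed (· ⊆ ·) fun t : T => ⋃ b ∈ t.1, (b : Set X) := fun t₁ t₂ =>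
    ⟨⟨t₁.1 ∪ t₂.1, by
        rw [Finset.set_biUnion_union]
        exact Set.union_subset t₁.2 t₂.2⟩,
      by simp only [Finset.set_biUnion_union]; exact Set.subset_union_left,
      by simp only [Finset.set_biUnion_union]; exact Set.subset_union_right⟩
  calc μ B - ν B ≤ μ U - ν U + ε := by
        rw [tsub_le_iff_right, add_assoc]
        calc μ B ≤ μ U := measure_mono hBU
          _ ≤ μ U - ν U + ν U := le_tsub_add
          _ ≤ μ U - ν U + (ν B + ε) := by gcongr
          _ = μ U - ν U + (ε + ν B) := by rw [add_comm (ν B)]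
    _ ≤ (⨆ t : Finset (countableBasis X), (μ (⋃ b ∈ t, (b : Set X)) - ν (⋃ b ∈ t, b))) + ε := by
        gcongr
        rw [← hU_eq, hdir.measure_iUnion, ENNReal.iSup_sub]
        exact iSup_le fun t => le_iSup_of_le t.1 <|
          tsub_le_tsub_left (measure_mono (Set.subset_iUnion (fun t : T => _) t)) _

lemma etvDist_eq_iSup_finite_basis_union (μ ν : Measure X) [IsFiniteMeasure μ]
    [IsFiniteMeasure ν] :
    etvDist μ ν = ⨆ t : Finset (countableBasis X),
      ((μ (⋃ b ∈ t, (b : Set X)) - ν (⋃ b ∈ t, b)) ⊔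
        (ν (⋃ b ∈ t, (b : Set X)) - μ (⋃ b ∈ t, b))) := by
  have hopen : ∀ t : Finset (countableBasis X), MeasurableSet (⋃ b ∈ t, (b : Set X)) := fun t =>
    (isOpen_biUnion fun b _ => isOpen_of_mem_countableBasis b.2).measurableSet
  refine le_antisymm (etvDist_le fun B _ => sup_le ?_ ?_) (iSup_le fun t => le_etvDist (hopen t))
  · exact (tsub_le_iSup_finite_basis_union μ ν B).trans (iSup_mono fun _ => le_sup_left)
  · exact (tsub_le_iSup_finite_basis_union ν μ B).trans (iSup_mono fun _ => le_sup_right)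

lemma measurable_etvDist {α : Type*} [MeasurableSpace α] {ξ ζ : α → Measure X}
    (hξ : Measurable ξ) (hζ : Measurable ζ) [∀ a, IsFiniteMeasure (ξ a)]
    [∀ a, IsFiniteMeasure (ζ a)] :
    Measurable fun a => etvDist (ξ a) (ζ a) := by
  simp_rw [etvDist_eq_iSup_finite_basis_union]
  refine Measurable.iSup fun t => ?_
  have hW : MeasurableSet (⋃ b ∈ t, (b : Set X)) :=
    (isOpen_biUnion fun b _ => isOpen_of_mem_countableBasis b.2).measurableSet
  have hξW := (Measure.measurable_coe hW).comp hξ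
  have hζW := (Measure.measurable_coe hW).comp hζ
  exact (hξW.sub hζW).sup (hζW.sub hξW)

lemma tendsto_etvDist_bind {α : Type*} [MeasurableSpace α] {μ : ℕ → Measure α}
    {μ₀ : Measure α} [∀ n, IsFiniteMeasure (μ n)] [IsFiniteMeasure μ₀] {F : ℕ → α → Measure X} {F₀ : α → Measure X}
    (hF : ∀ n, Measurable (F n)) (hF₀ : Measurable F₀)
    (hF_le : ∀ n a, F n a Set.univ ≤ 1) (hF₀_le : ∀ a, F₀ a Set.univ ≤ 1)
    (hμ : Tendsto (fun n => etvDist (μ n) μ₀) atTop (𝓝 0))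
    (hF_lim : ∀ᵐ a ∂μ₀, Tendsto (fun n => etvDist (F n a) (F₀ a)) atTop (𝓝 0)) :
    Tendsto (fun n => etvDist ((μ n).bind (F n)) (μ₀.bind F₀)) atTop (𝓝 0) := by
  have : ∀ n a, IsFiniteMeasure (F n a) := fun n a =>
    ⟨(hF_le n a).trans_lt ENNReal.one_lt_top⟩
  have : ∀ a, IsFiniteMeasure (F₀ a) := fun a => ⟨(hF₀_le a).trans_lt ENNReal.one_lt_top⟩
  have hint : Tendsto (fun n => ∫⁻ a, etvDist (F n a) (F₀ a) ∂μ₀) atTop (𝓝 0) := by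
    simpa using tendsto_lintegral_of_dominated_convergence (fun _ => 1)
      (fun n => measurable_etvDist (hF n) hF₀)
      (fun n => ae_of_all _ fun a => (etvDist_le_max _ _).trans (sup_le (hF_le n a) (hF₀_le a)))
      (by simp) hF_lim
  refine tendsto_of_tendsto_of_tendsto_of_le_of_le tendsto_const_nhds
    (by simpa using hμ.add hint) (fun _ => zero_le) fun n => ?_
  exact etvDist_bind_le (hF n) hF₀ (hF_le n)

end Measurability

section Paths

variable {E : Type*} {B R R1 : Set E} {ω ω' : ℕ → E}

lemma hitTime_eq_top_iff : hitTime B ω = ⊤ ↔ ∀ n, ω n ∉ B := by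
  simp [hitTime]

lemma hitTime_eq_coe_iff {k : ℕ} : hitTime B ω = k ↔ ω k ∈ B ∧ ∀ i < k, ω i ∉ B := by
  classical
  by_cases hex : ∃ n, ω n ∈ B
  · have hfind : hitTime B ω = Nat.find hex :=
      le_antisymm (iInf₂_le (f := fun n (_ : ω n ∈ B) => (n : ℕ∞)) _ (Nat.find_spec hex))
        (le_iInf₂ fun n hn => by exact_mod_cast Nat.find_min' hex hn)
    rw [hfind, Nat.cast_inj, Nat.find_eq_iff]
  · simp only [not_exists] at hex
    simp [hitTime_eq_top_iff.mpr hex, hex]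

lemma measurable_hitTime [MeasurableSpace E] (hB : MeasurableSet B) :
    Measurable (hitTime B : (ℕ → E) → ℕ∞) := by
  refine measurable_to_countable' fun t => ?_
  induction t using ENat.recTopCoe with
  | top =>
    have : hitTime B ⁻¹' {⊤} = ⋂ n, (fun ω : ℕ → E => ω n) ⁻¹' Bᶜ := by
      ext ω
      simp [hitTime_eq_top_iff]
    exact this ▸ MeasurableSet.iInter fun n => measurable_pi_apply n hB.compl
  | coe k =>
    have : hitTime B ⁻¹' {(k : ℕ∞)} =
        (fun ω : ℕ → E => ω k) ⁻¹' B ∩ ⋂ i < k, (fun ω : ℕ → E => ω i) ⁻¹' Bᶜ := by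
      ext ω
      simp [hitTime_eq_coe_iff]
    exact this ▸ (measurable_pi_apply k hB).inter
      (MeasurableSet.iInter fun i => MeasurableSet.iInter fun _ => measurable_pi_apply i hB.compl)

lemma hitTime_congr {k : ℕ} (h : hitTime B ω = k) (hagree : ∀ i ≤ k, ω i = ω' i) :
    hitTime B ω' = k := by
  rw [hitTime_eq_coe_iff] at h ⊢
  exact ⟨hagree k le_rfl ▸ h.1, fun i hi => hagree i hi.le ▸ h.2 i hi⟩

lemma measurable_apply_of_measurable_index [MeasurableSpace E] {g : (ℕ → E) → ℕ}
    (hg : Measurable g) : Measurable fun ω : ℕ → E => ω (g ω) := by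
  intro s hs
  have : (fun ω : ℕ → E => ω (g ω)) ⁻¹' s = ⋃ i, g ⁻¹' {i} ∩ (fun ω : ℕ → E => ω i) ⁻¹' s := by
    ext ω
    simp
  exact this ▸ MeasurableSet.iUnion fun i =>
    (hg (measurableSet_singleton i)).inter (measurable_pi_apply i hs)

lemma measurable_tauR [MeasurableSpace E] (hR : MeasurableSet R) (hR1 : MeasurableSet R1) :
    Measurable (tauR R R1) := by
  have h₁ : Measurable (hitTime R1ᶜ : (ℕ → E) → ℕ∞) := measurable_hitTime hR1.compl
  have hshift : Measurable fun ω : ℕ → E => fun n => ω ((hitTime R1ᶜ ω).toNat + n) :=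
    measurable_pi_lambda _ fun n => measurable_apply_of_measurable_index
      ((measurable_of_countable fun t : ℕ∞ => t.toNat + n).comp h₁)
  exact (measurable_of_countable fun p : ℕ∞ × ℕ∞ => p.1 + p.2).comp
    (h₁.prodMk ((measurable_hitTime hR).comp hshift))

lemma measurable_apply_tauR [MeasurableSpace E] (hR : MeasurableSet R) (hR1 : MeasurableSet R1) :
    Measurable fun ω : ℕ → E => ω (tauR R R1 ω).toNat :=
  measurable_apply_of_measurable_index
    ((measurable_of_countable ENat.toNat).comp (measurable_tauR hR hR1))

lemma exists_tauR_eq_add (h : tauR R R1 ω ≠ ⊤) : ∃ j k : ℕ, hitTime R1ᶜ ω = j ∧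
    hitTime R (fun n => ω (j + n)) = k ∧ tauR R R1 ω = (j + k : ℕ) := by
  obtain ⟨j, hj⟩ := ENat.ne_top_iff_exists.mp fun h₁ : hitTime R1ᶜ ω = ⊤ => h (by simp [tauR, h₁])
  obtain ⟨k, hk⟩ := ENat.ne_top_iff_exists.mp
    fun h₂ : hitTime R (fun n => ω (j + n)) = ⊤ => h (by simp [tauR, ← hj, h₂])
  exact ⟨j, k, hj.symm, hk.symm, by simp [tauR, ← hj, ← hk]⟩

lemma apply_tauR_mem (h : tauR R R1 ω ≠ ⊤) : ω (tauR R R1 ω).toNat ∈ R := by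
  obtain ⟨j, k, -, hk, hτ⟩ := exists_tauR_eq_add h
  rw [hτ, ENat.toNat_natCast]
  exact (hitTime_eq_coe_iff.mp hk).1

lemma tauR_congr {m : ℕ} (hagree : ∀ i ≤ m, ω i = ω' i) (h : tauR R R1 ω ≤ m) :
    tauR R R1 ω' = tauR R R1 ω := by
  obtain ⟨j, k, hj, hk, hτ⟩ := exists_tauR_eq_add (ne_top_of_le_ne_top (ENat.natCast_ne_top m) h)
  have hjk : j + k ≤ m := by exact_mod_cast hτ ▸ h
  have hj' := hitTime_congr hj fun i hi => hagree i (by omega)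
  have hk' := hitTime_congr (ω' := fun n => ω' (j + n)) hk fun i hi => hagree (j + i) (by omega)
  rw [hτ, tauR, hj']
  simp [hk']

def freezeAt (m : ℕ) (ω : ℕ → E) : ℕ → E := fun n => ω (min n m)

lemma measurable_freezeAt [MeasurableSpace E] (m : ℕ) : Measurable (freezeAt (E := E) m) :=
  measurable_pi_lambda _ fun _ => measurable_pi_apply _

lemma tauR_freezeAt {m : ℕ} (h : tauR R R1 ω ≤ m) : tauR R R1 (freezeAt m ω) = tauR R R1 ω :=
  tauR_congr (fun i hi => by simp [freezeAt, hi]) h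

lemma preimage_freezeAt_tauR_le (m : ℕ) :
    freezeAt m ⁻¹' {ω : ℕ → E | tauR R R1 ω ≤ m} = {ω | tauR R R1 ω ≤ m} := by
  ext ω
  refine ⟨fun (h : tauR R R1 (freezeAt m ω) ≤ m) => ?_, fun (h : tauR R R1 ω ≤ m) =>
    show tauR R R1 (freezeAt m ω) ≤ m by rwa [tauR_freezeAt h]⟩
  exact (tauR_congr (ω' := ω) (fun i hi => by simp [freezeAt, hi]) h).trans_le h

lemma apply_tauR_freezeAt {m : ℕ} (h : tauR R R1 ω ≤ m) :
    freezeAt m ω (tauR R R1 (freezeAt m ω)).toNat = ω (tauR R R1 ω).toNat := by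
  rw [tauR_freezeAt h]
  simp [freezeAt, ENat.toNat_le_of_le_natCast h]

lemma measurable_prepend [MeasurableSpace E] (x : E) : Measurable (prepend x) :=
  measurable_pi_lambda _ fun n => by cases n <;> simp [prepend, measurable_pi_apply]

lemma freezeAt_zero_comp_prepend (x : E) : freezeAt 0 ∘ prepend x = fun _ _ => x := by
  funext ω n
  simp [freezeAt, prepend]

lemma freezeAt_succ_comp_prepend (x : E) (m : ℕ) :
    freezeAt (m + 1) ∘ prepend x = prepend x ∘ freezeAt m := by
  funext ω n
  cases n <;> simp [freezeAt, prepend, Nat.succ_min_succ]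

end Paths

instance isMarkovKernel_Qctrl {E U : Type*} [MeasurableSpace E] [MeasurableSpace U]
    (P : Kernel (E × U) E) [IsMarkovKernel P] (u : E → U) (hu : Measurable u) :
    IsMarkovKernel (Qctrl P u hu) := by
  unfold Qctrl
  infer_instance

section PathLaw

variable {E : Type*} [MeasurableSpace E]

lemma map_bind_eq_bind_map {α β γ : Type*} [MeasurableSpace α] [MeasurableSpace β]
    [MeasurableSpace γ] (μ : Measure α) {f : α → Measure β} (hf : Measurable f) {g : β → γ}
    (hg : Measurable g) : (μ.bind f).map g = μ.bind fun a => (f a).map g := by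
  ext s hs
  rw [Measure.map_apply hg hs, Measure.bind_apply (hg hs) hf.aemeasurable,
    Measure.bind_apply hs (show Measurable fun a => (f a).map g from
      (Measure.measurable_map g hg).comp hf).aemeasurable]
  exact lintegral_congr fun a => (Measure.map_apply hg hs).symm

lemma IsPathLaw.map_freezeAt_zero {Q : Kernel E E} {Pl : E → Measure (ℕ → E)}
    (h : IsPathLaw Q Pl) (x : E) : (Pl x).map (freezeAt 0) = Measure.dirac fun _ => x := by
  have hmass : (Q x).bind Pl Set.univ = 1 := by
    have := h.2.1 x
    simpa [Measure.map_apply (measurable_prepend x) MeasurableSet.univ] using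
      (congrArg (· Set.univ) (h.2.2 x)).symm
  rw [h.2.2 x, Measure.map_map (measurable_freezeAt 0) (measurable_prepend x),
    freezeAt_zero_comp_prepend, Measure.map_const, hmass, one_smul]

lemma IsPathLaw.map_freezeAt_succ {Q : Kernel E E} {Pl : E → Measure (ℕ → E)}
    (h : IsPathLaw Q Pl) (x : E) (m : ℕ) :
    (Pl x).map (freezeAt (m + 1)) =
      ((Q x).bind fun y => (Pl y).map (freezeAt m)).map (prepend x) := by
  rw [h.2.2 x, Measure.map_map (measurable_freezeAt _) (measurable_prepend x),
    freezeAt_succ_comp_prepend, ← Measure.map_map (measurable_prepend x) (measurable_freezeAt m),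
    map_bind_eq_bind_map _ h.1 (measurable_freezeAt m)]

lemma tendsto_etvDist_map_freezeAt [TopologicalSpace E] [SecondCountableTopology E]
    [TopologicalSpace.PseudoMetrizableSpace E] [BorelSpace E]
    {Q : ℕ → Kernel E E} {Q₀ : Kernel E E} [∀ n, IsFiniteKernel (Q n)] [IsFiniteKernel Q₀]
    {Pl : ℕ → E → Measure (ℕ → E)} {Pl₀ : E → Measure (ℕ → E)}
    (hPl : ∀ n, IsPathLaw (Q n) (Pl n)) (hPl₀ : IsPathLaw Q₀ Pl₀)
    (hQ : ∀ x, Tendsto (fun n => etvDist (Q n x) (Q₀ x)) atTop (𝓝 0)) (m : ℕ) (x : E) :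
    Tendsto (fun n => etvDist ((Pl n x).map (freezeAt m)) ((Pl₀ x).map (freezeAt m)))
      atTop (𝓝 0) := by
  induction m generalizing x with
  | zero => simp [(hPl _).map_freezeAt_zero, hPl₀.map_freezeAt_zero]
  | succ m ih =>
    simp_rw [(hPl _).map_freezeAt_succ, hPl₀.map_freezeAt_succ]
    have hmass : ∀ {Q : Kernel E E} {Pl : E → Measure (ℕ → E)}, IsPathLaw Q Pl →
        ∀ y, (Pl y).map (freezeAt m) Set.univ ≤ 1 := fun h y => by
      have := h.2.1 y
      rw [Measure.map_apply (measurable_freezeAt m) MeasurableSet.univ]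
      exact prob_le_one
    refine tendsto_of_tendsto_of_tendsto_of_le_of_le tendsto_const_nhds
      (tendsto_etvDist_bind (fun n => ?_) ?_ (fun n => hmass (hPl n)) (hmass hPl₀) (hQ x)
        (ae_of_all _ ih)) (fun _ => zero_le) fun n => etvDist_map_le _ _ (measurable_prepend x)
    · exact (Measure.measurable_map _ (measurable_freezeAt m)).comp (hPl n).1
    · exact (Measure.measurable_map _ (measurable_freezeAt m)).comp hPl₀.1

end PathLaw

lemma tendsto_zero_of_forall_le_add {f : ℕ → ℝ≥0∞} {g : ℕ → ℕ → ℝ≥0∞} {c : ℕ → ℝ≥0∞}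
    (hg : ∀ m, Tendsto (g m) atTop (𝓝 0)) (hc : Tendsto c atTop (𝓝 0))
    (h : ∀ m n, f n ≤ g m n + c m) : Tendsto f atTop (𝓝 0) := by
  simp only [ENNReal.tendsto_atTop_zero] at hg hc ⊢
  intro ε hε
  obtain ⟨m, hm⟩ := hc (ε / 2) (ENNReal.half_pos hε.ne')
  obtain ⟨N, hN⟩ := hg m (ε / 2) (ENNReal.half_pos hε.ne')
  exact ⟨N, fun n hn =>
    (h m n).trans ((add_le_add (hN n hn) (hm m le_rfl)).trans_eq (ENNReal.add_halves ε))⟩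

section EmbeddedKernel

variable {E : Type*} [MeasurableSpace E] {R R1 : Set E}

lemma measurableSet_tauR_le (hR : MeasurableSet R) (hR1 : MeasurableSet R1) (m : ℕ) :
    MeasurableSet {ω : ℕ → E | tauR R R1 ω ≤ m} :=
  measurable_tauR hR hR1 (Set.to_countable _).measurableSet

lemma measurable_embMeas (hR : MeasurableSet R) (hR1 : MeasurableSet R1)
    {Pl : E → Measure (ℕ → E)} (hPl : Measurable Pl) : Measurable (embMeas R R1 Pl) := by
  refine Measure.measurable_of_measurable_coe _ fun s hs => ?_
  have hX := measurable_apply_tauR hR hR1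
  simp_rw [embMeas, Measure.map_apply hX hs, Measure.restrict_apply (hX hs)]
  exact (Measure.measurable_coe ((hX hs).inter
    (measurable_tauR hR hR1 (measurableSet_singleton ⊤).compl))).comp hPl

lemma IsPathLaw.embMeas_univ_le {Q : Kernel E E} {Pl : E → Measure (ℕ → E)}
    (h : IsPathLaw Q Pl) (hR : MeasurableSet R) (hR1 : MeasurableSet R1) (x : E) :
    embMeas R R1 Pl x Set.univ ≤ 1 := by
  have := h.2.1 x
  rw [embMeas, Measure.map_apply (measurable_apply_tauR hR hR1) MeasurableSet.univ]
  exact (Measure.restrict_le_self _).trans prob_le_one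

lemma embMeas_compl (hR : MeasurableSet R) (hR1 : MeasurableSet R1)
    (Pl : E → Measure (ℕ → E)) (x : E) : embMeas R R1 Pl x Rᶜ = 0 := by
  have hX := measurable_apply_tauR hR hR1
  rw [embMeas, Measure.map_apply hX hR.compl, Measure.restrict_apply (hX hR.compl)]
  exact measure_mono_null (fun ω ⟨hω, hne⟩ => hω (apply_tauR_mem hne)) measure_empty

/-- On `{τ_R ≤ m}` both `τ_R` and `X_{τ_R}` only see the path up to time `m`. -/
lemma map_restrict_tauR_le_eq (hR : MeasurableSet R) (hR1 : MeasurableSet R1)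
    (μ : Measure (ℕ → E)) (m : ℕ) :
    (μ.restrict {ω | tauR R R1 ω ≤ m}).map (fun ω => ω (tauR R R1 ω).toNat) =
      ((μ.map (freezeAt m)).restrict {ω | tauR R R1 ω ≤ m}).map
        (fun ω => ω (tauR R R1 ω).toNat) := by
  have hS := measurableSet_tauR_le hR hR1 m
  rw [Measure.restrict_map (measurable_freezeAt m) hS, preimage_freezeAt_tauR_le,
    Measure.map_map (measurable_apply_tauR hR hR1) (measurable_freezeAt m)]
  refine Measure.map_congr ?_
  filter_upwards [ae_restrict_mem hS] with ω hω using (apply_tauR_freezeAt hω).symm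

lemma etvDist_embMeas_le (hR : MeasurableSet R) (hR1 : MeasurableSet R1)
    (Pl₁ Pl₂ : E → Measure (ℕ → E)) (x : E) (m : ℕ) :
    etvDist (embMeas R R1 Pl₁ x) (embMeas R R1 Pl₂ x) ≤
      Pl₁ x {ω | m < tauR R R1 ω} +
        etvDist ((Pl₁ x).map (freezeAt m)) ((Pl₂ x).map (freezeAt m)) +
          Pl₂ x {ω | m < tauR R R1 ω} := by
  have hX := measurable_apply_tauR hR hR1
  have hS := measurableSet_tauR_le hR hR1 m
  let stopped (μ : Measure (ℕ → E)) : Measure E :=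
    (μ.restrict {ω | tauR R R1 ω ≤ m}).map fun ω => ω (tauR R R1 ω).toNat
  have htail : ∀ μ : Measure (ℕ → E),
      etvDist ((μ.restrict {ω | tauR R R1 ω ≠ ⊤}).map fun ω => ω (tauR R R1 ω).toNat)
        (stopped μ) ≤ μ {ω | m < tauR R R1 ω} := fun μ => by
    have hsub : {ω : ℕ → E | tauR R R1 ω ≤ m} ⊆ {ω | tauR R R1 ω ≠ ⊤} :=
      fun ω h => ne_top_of_le_ne_top (ENat.natCast_ne_top m) h
    calc _ = etvDist ((μ.restrict {ω | tauR R R1 ω ≠ ⊤}).map fun ω => ω (tauR R R1 ω).toNat)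
          (((μ.restrict {ω | tauR R R1 ω ≠ ⊤}).restrict {ω | tauR R R1 ω ≤ m}).map
            fun ω => ω (tauR R R1 ω).toNat) := by
          rw [Measure.restrict_restrict hS, Set.inter_eq_left.mpr hsub]
      _ ≤ (μ.restrict {ω | tauR R R1 ω ≠ ⊤}) {ω | tauR R R1 ω ≤ m}ᶜ :=
          (etvDist_map_le _ _ hX).trans (etvDist_restrict_self_le _ _)
      _ ≤ μ {ω | tauR R R1 ω ≤ m}ᶜ := Measure.restrict_le_self _
      _ = μ {ω | m < tauR R R1 ω} := by
          congr 1
          ext ω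
          simp
  have hmid : etvDist (stopped (Pl₁ x)) (stopped (Pl₂ x)) ≤
      etvDist ((Pl₁ x).map (freezeAt m)) ((Pl₂ x).map (freezeAt m)) := by
    dsimp only [stopped]
    rw [map_restrict_tauR_le_eq hR hR1 (Pl₁ x) m, map_restrict_tauR_le_eq hR hR1 (Pl₂ x) m]
    exact (etvDist_map_le _ _ hX).trans (etvDist_restrict_le _ _ hS)
  calc etvDist (embMeas R R1 Pl₁ x) (embMeas R R1 Pl₂ x)
      ≤ etvDist (embMeas R R1 Pl₁ x) (stopped (Pl₁ x)) +
          etvDist (stopped (Pl₁ x)) (stopped (Pl₂ x)) +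
            etvDist (stopped (Pl₂ x)) (embMeas R R1 Pl₂ x) :=
        (etvDist_triangle _ (stopped (Pl₂ x)) _).trans
          (add_le_add (etvDist_triangle _ _ _) le_rfl)
    _ ≤ _ := add_le_add (add_le_add (htail _) hmid) (etvDist_comm (stopped _) _ ▸ htail (Pl₂ x))

lemma measure_lt_tauR_le (hR : MeasurableSet R) (hR1 : MeasurableSet R1)
    (μ : Measure (ℕ → E)) (m : ℕ) :
    μ {ω | m < tauR R R1 ω} ≤
      (∫⁻ ω, (tauR R R1 ω : ℝ≥0∞) ^ 2 ∂μ) / ((m : ℝ≥0∞) + 1) ^ 2 := by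
  refine (measure_mono fun ω (hω : (m : ℕ∞) < tauR R R1 ω) => ?_).trans
    (meas_ge_le_lintegral_div ((measurable_of_countable fun t : ℕ∞ => (t : ℝ≥0∞) ^ 2).comp
      (measurable_tauR hR hR1)).aemeasurable (by positivity) (by simp))
  show ((m : ℝ≥0∞) + 1) ^ 2 ≤ (tauR R R1 ω : ℝ≥0∞) ^ 2
  gcongr
  exact_mod_cast ENat.toENNReal_le.mpr (Order.add_one_le_of_lt hω)

lemma tendsto_etvDist_embMeas (hR : MeasurableSet R) (hR1 : MeasurableSet R1)
    {Pl : ℕ → E → Measure (ℕ → E)} {Pl₀ : E → Measure (ℕ → E)} {x : E} {C : ℝ≥0∞}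
    (hC : C ≠ ⊤) (hPl : ∀ n, ∫⁻ ω, (tauR R R1 ω : ℝ≥0∞) ^ 2 ∂(Pl n x) ≤ C)
    (hPl₀ : ∫⁻ ω, (tauR R R1 ω : ℝ≥0∞) ^ 2 ∂(Pl₀ x) ≤ C)
    (hfreeze : ∀ m, Tendsto (fun n => etvDist ((Pl n x).map (freezeAt m))
      ((Pl₀ x).map (freezeAt m))) atTop (𝓝 0)) :
    Tendsto (fun n => etvDist (embMeas R R1 (Pl n) x) (embMeas R R1 Pl₀ x)) atTop (𝓝 0) := by
  have htail : ∀ μ : Measure (ℕ → E), ∫⁻ ω, (tauR R R1 ω : ℝ≥0∞) ^ 2 ∂μ ≤ C →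
      ∀ m : ℕ, μ {ω | m < tauR R R1 ω} ≤ C / ((m : ℝ≥0∞) + 1) ^ 2 := fun μ hμ m =>
    (measure_lt_tauR_le hR hR1 μ m).trans (ENNReal.div_le_div_right hμ _)
  have hsq : Tendsto (fun m : ℕ => ((m : ℝ≥0∞) + 1) ^ 2) atTop (𝓝 ⊤) := by
    simpa using ENNReal.Tendsto.pow (n := 2)
      (ENNReal.tendsto_nat_nhds_top.comp (tendsto_add_atTop_nat 1))
  have hc : Tendsto (fun m : ℕ => C / ((m : ℝ≥0∞) + 1) ^ 2) atTop (𝓝 0) := by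
    simpa using ENNReal.Tendsto.const_div hsq (Or.inr hC)
  refine tendsto_zero_of_forall_le_add hfreeze (by simpa using hc.add hc) fun m n => ?_
  calc _ ≤ _ := etvDist_embMeas_le hR hR1 (Pl n) Pl₀ x m
    _ ≤ C / ((m : ℝ≥0∞) + 1) ^ 2 +
          etvDist ((Pl n x).map (freezeAt m)) ((Pl₀ x).map (freezeAt m)) +
            C / ((m : ℝ≥0∞) + 1) ^ 2 := by
        gcongr
        exacts [htail _ (hPl n) m, htail _ hPl₀ m]
    _ = _ := by ring

end EmbeddedKernel

section Iterates

variable {E : Type*} [MeasurableSpace E]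

lemma measurable_mIter {K : E → Measure E} (hK : Measurable K) (k : ℕ) :
    Measurable (mIter K k) := by
  induction k with
  | zero => exact Measure.measurable_dirac
  | succ k ih => exact (Measure.measurable_bind' ih).comp hK

lemma mIter_univ_le {K : E → Measure E} (hK : Measurable K) (hK_le : ∀ y, K y Set.univ ≤ 1)
    (k : ℕ) (y : E) : mIter K k y Set.univ ≤ 1 := by
  induction k generalizing y with
  | zero => simp [mIter]
  | succ k ih =>
    rw [mIter, Measure.bind_apply MeasurableSet.univ (measurable_mIter hK k).aemeasurable]
    exact (lintegral_mono ih).trans ((lintegral_one (μ := K y)).trans_le (hK_le y))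

lemma isFiniteMeasure_mIter {K : E → Measure E} (hK : Measurable K)
    (hK_le : ∀ y, K y Set.univ ≤ 1) (k : ℕ) (y : E) : IsFiniteMeasure (mIter K k y) :=
  ⟨(mIter_univ_le hK hK_le k y).trans_lt ENNReal.one_lt_top⟩

lemma tendsto_etvDist_mIter [TopologicalSpace E] [SecondCountableTopology E]
    [TopologicalSpace.PseudoMetrizableSpace E] [BorelSpace E] {K : ℕ → E → Measure E}
    {K₀ : E → Measure E} {R : Set E} (hK : ∀ n, Measurable (K n)) (hK₀ : Measurable K₀)
    (hK_le : ∀ n y, K n y Set.univ ≤ 1) (hK₀_le : ∀ y, K₀ y Set.univ ≤ 1)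
    (hK₀_R : ∀ y, K₀ y Rᶜ = 0)
    (hlim : ∀ y ∈ R, Tendsto (fun n => etvDist (K n y) (K₀ y)) atTop (𝓝 0)) (k : ℕ) :
    ∀ y ∈ R, Tendsto (fun n => etvDist (mIter (K n) k y) (mIter K₀ k y)) atTop (𝓝 0) := by
  induction k with
  | zero => simp [mIter]
  | succ k ih =>
    intro y hy
    have : ∀ n, IsFiniteMeasure (K n y) := fun n => ⟨(hK_le n y).trans_lt ENNReal.one_lt_top⟩
    have : IsFiniteMeasure (K₀ y) := ⟨(hK₀_le y).trans_lt ENNReal.one_lt_top⟩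
    exact tendsto_etvDist_bind (fun n => measurable_mIter (hK n) k) (measurable_mIter hK₀ k)
      (fun n => mIter_univ_le (hK n) (hK_le n) k) (mIter_univ_le hK₀ hK₀_le k) (hlim y hy)
      (measure_eq_zero_iff_ae_notMem.mp (hK₀_R y) |>.mono fun z hz => ih z (not_not.mp hz))

end Iterates

theorem stmt16_general {E U : Type*} [MetricSpace E] [PolishSpace E]
    [MeasurableSpace E] [BorelSpace E]
    [MeasurableSpace U]
    (P : Kernel (E × U) E) [IsMarkovKernel P]
    -- two concentric closed balls R ⊆ R₁
    (z : E) (r r1 : ℝ)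
    (R R1 : Set E) (hR : R = Metric.closedBall z r) (hR1 : R1 = Metric.closedBall z r1)
    (un : ℕ → E → U) (u : E → U)
    (hun : ∀ n, Measurable (un n)) (hu : Measurable u)
    (htv : ∀ x, Tendsto
      (fun n => tvDist (Qctrl P (un n) (hun n) x) (Qctrl P u hu x)) atTop (nhds 0))
    -- the path laws of the controlled chains
    (Pln : ℕ → E → Measure (ℕ → E)) (Plu : E → Measure (ℕ → E))
    (hPln : ∀ n, IsPathLaw (Qctrl P (un n) (hun n)) (Pln n))
    (hPlu : IsPathLaw (Qctrl P u hu) Plu)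
    -- (EC)
    (hEC : ∃ C : ℝ≥0∞, C ≠ ⊤ ∧ ∀ x ∈ R,
      (∀ n, ∫⁻ ω, ((tauR R R1 ω : ℝ≥0∞)) ^ 2 ∂ (Pln n x) ≤ C) ∧
      ∫⁻ ω, ((tauR R R1 ω : ℝ≥0∞)) ^ 2 ∂ (Plu x) ≤ C) :
    ∀ k : ℕ, 1 ≤ k → ∀ x ∈ R,
      Tendsto (fun n => ⨆ B : {B : Set E // MeasurableSet B ∧ B ⊆ R},
          |(mIter (embMeas R R1 (Pln n)) k x B.1).toReal -
            (mIter (embMeas R R1 Plu) k x B.1).toReal|)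
        atTop (nhds 0) := by
  obtain ⟨C, hC, hEC⟩ := hEC
  have hRm : MeasurableSet R := hR ▸ measurableSet_closedBall
  have hR1m : MeasurableSet R1 := hR1 ▸ measurableSet_closedBall
  have hK (x : E) (hx : x ∈ R) :
      Tendsto (fun n => etvDist (embMeas R R1 (Pln n) x) (embMeas R R1 Plu x)) atTop (𝓝 0) :=
    tendsto_etvDist_embMeas hRm hR1m hC (hEC x hx).1 (hEC x hx).2 fun m =>
      tendsto_etvDist_map_freezeAt hPln hPlu (fun y => tendsto_etvDist_of_tendsto_tvDist (htv y))
        m x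
  intro k _ x hx
  have hK_meas (n : ℕ) := measurable_embMeas hRm hR1m (hPln n).1
  have hK₀_meas := measurable_embMeas hRm hR1m hPlu.1
  have hK_le (n : ℕ) := (hPln n).embMeas_univ_le hRm hR1m
  have hK₀_le := hPlu.embMeas_univ_le hRm hR1m
  have : ∀ n, IsFiniteMeasure (mIter (embMeas R R1 (Pln n)) k x) := fun n =>
    isFiniteMeasure_mIter (hK_meas n) (hK_le n) k x
  have := isFiniteMeasure_mIter hK₀_meas hK₀_le k x
  exact tendsto_iSup_abs_toReal_sub_of_tendsto_etvDist (· ⊆ R) <|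
    tendsto_etvDist_mIter hK_meas hK₀_meas hK_le hK₀_le (embMeas_compl hRm hR1m Plu) hK k x hx

/-- Corollary 3: under (EC) and total variation convergence of the
controlled kernels along `u_n → u`, the iterates of the embedded kernels converge in
total variation on Borel subsets of `R`, for every `k ≥ 1` and `x ∈ R`. -/
theorem stmt16 {E U : Type*} [MetricSpace E] [PolishSpace E]
    [MeasurableSpace E] [BorelSpace E]
    [MetricSpace U] [CompactSpace U] [MeasurableSpace U] [BorelSpace U]
    (P : Kernel (E × U) E) [IsMarkovKernel P]
    -- two concentric closed balls R ⊆ R₁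
    (z : E) (r r1 : ℝ) (hr : r ≤ r1)
    (R R1 : Set E) (hR : R = Metric.closedBall z r) (hR1 : R1 = Metric.closedBall z r1)
    (un : ℕ → E → U) (u : E → U)
    (hun : ∀ n, Measurable (un n)) (hu : Measurable u)
    (hconv : ∀ x, Tendsto (fun n => un n x) atTop (nhds (u x)))
    (htv : ∀ x, Tendsto
      (fun n => tvDist (Qctrl P (un n) (hun n) x) (Qctrl P u hu x)) atTop (nhds 0))
    -- the path laws of the controlled chains
    (Pln : ℕ → E → Measure (ℕ → E)) (Plu : E → Measure (ℕ → E))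
    (hPln : ∀ n, IsPathLaw (Qctrl P (un n) (hun n)) (Pln n))
    (hPlu : IsPathLaw (Qctrl P u hu) Plu)
    -- (EC)
    (hEC : ∃ C : ℝ≥0∞, C ≠ ⊤ ∧ ∀ x ∈ R,
      (∀ n, ∫⁻ ω, ((tauR R R1 ω : ℝ≥0∞)) ^ 2 ∂ (Pln n x) ≤ C) ∧
      ∫⁻ ω, ((tauR R R1 ω : ℝ≥0∞)) ^ 2 ∂ (Plu x) ≤ C) :
    ∀ k : ℕ, 1 ≤ k → ∀ x ∈ R,
      Tendsto (fun n => ⨆ B : {B : Set E // MeasurableSet B ∧ B ⊆ R},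
          |(mIter (embMeas R R1 (Pln n)) k x B.1).toReal -
            (mIter (embMeas R R1 Plu) k x B.1).toReal|)
        atTop (nhds 0) :=
  stmt16_general P z r r1 R R1 hR hR1 un u hun hu htv Pln Plu hPln hPlu hEC
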